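/- arXiv:2605.26888 — 4 statements merged into one kernel-verified Lean document; each statement's English description precedes it below -/
import Mathlib

section
/- Under the conditions α₁₀, α₀₁, α₁₁ ∈ [0,1), α₁₀+α₀₁+α₁₁ < 1, and at most one coefficient zero, the discriminant (1+α₁₀²−α₀₁²−α₁₁²)² − 4(α₁₀+α₀₁α₁₁)² is strictly positive, and the quantities λ = [(1+α₁₀²−α₀₁²−α₁₁²) − √D]/(2(α₁₀+α₀₁α₁₁)) and η = (α₀₁+α₁₁λ)/(1−α₁₀λ) both lie in the open interval (0,1). -/
/-- **Positivity of the discriminant and location of `λ` and `η` in `(0,1)`.**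
Under `α₁₀, α₀₁, α₁₁ ∈ [0,1)`, `α₁₀+α₀₁+α₁₁ < 1`, and at most one coefficient zero,
the discriminant `D = (1+α₁₀²−α₀₁²−α₁₁²)² − 4(α₁₀+α₀₁α₁₁)²` is strictly positive, and
`λ = [(1+α₁₀²−α₀₁²−α₁₁²) − √D]/(2(α₁₀+α₀₁α₁₁))` and `η = (α₀₁+α₁₁λ)/(1−α₁₀λ)`
both lie in the open interval `(0,1)`. -/
theorem INAR11_discriminant_pos_lambda_eta_mem_Ioo
    (α10 α01 α11 : ℝ)
    (h10 : α10 ∈ Set.Ico (0 : ℝ) 1) (h01 : α01 ∈ Set.Ico (0 : ℝ) 1)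
    (h11 : α11 ∈ Set.Ico (0 : ℝ) 1) (hsum : α10 + α01 + α11 < 1)
    (hzero : ¬(α10 = 0 ∧ α01 = 0) ∧ ¬(α10 = 0 ∧ α11 = 0) ∧ ¬(α01 = 0 ∧ α11 = 0))
    (D lam η : ℝ)
    (hD : D = (1 + α10 ^ 2 - α01 ^ 2 - α11 ^ 2) ^ 2 - 4 * (α10 + α01 * α11) ^ 2)
    (hlam : lam = ((1 + α10 ^ 2 - α01 ^ 2 - α11 ^ 2) - Real.sqrt D)
        / (2 * (α10 + α01 * α11)))
    (hη : η = (α01 + α11 * lam) / (1 - α10 * lam)) :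
    0 < D ∧ lam ∈ Set.Ioo (0 : ℝ) 1 ∧ η ∈ Set.Ioo (0 : ℝ) 1 := by
  obtain ⟨ha0, ha1⟩ := h10
  obtain ⟨hb0, hb1⟩ := h01
  obtain ⟨hc0, hc1⟩ := h11
  set B : ℝ := 1 + α10 ^ 2 - α01 ^ 2 - α11 ^ 2 with hB
  set d : ℝ := α10 + α01 * α11 with hd'
  have hd : 0 < d := by
    rcases eq_or_lt_of_le ha0 with h | h
    · have hb : 0 < α01 := lt_of_le_of_ne hb0 (fun e => hzero.1 ⟨h.symm, e.symm⟩)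
      have hc : 0 < α11 := lt_of_le_of_ne hc0 (fun e => hzero.2.1 ⟨h.symm, e.symm⟩)
      have := mul_pos hb hc
      simp [hd', ← h]; linarith
    · nlinarith [mul_nonneg hb0 hc0]
  have hBm : 0 < B - 2 * d := by
    have h1 : 0 < 1 - α10 - α01 - α11 := by linarith
    have h2 : 0 < 1 - α10 + α01 + α11 := by linarith
    have := mul_pos h1 h2
    simp only [hB, hd']; nlinarith
  have hBp : 0 < B + 2 * d := by
    have h1 : 0 < 1 + α10 - α01 + α11 := by linarith
    have h2 : 0 < 1 + α10 + α01 - α11 := by linarith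
    have := mul_pos h1 h2
    simp only [hB, hd']; nlinarith
  have hBpos : 0 < B := by linarith
  have hDeq : D = (B - 2 * d) * (B + 2 * d) := by rw [hD]; ring
  have hDpos : 0 < D := by rw [hDeq]; exact mul_pos hBm hBp
  have hsq : Real.sqrt D ^ 2 = D := Real.sq_sqrt hDpos.le
  have hsnn : 0 ≤ Real.sqrt D := Real.sqrt_nonneg D
  have hlt : Real.sqrt D < B := by
    rw [show Real.sqrt D < B ↔ D < B ^ 2 from Real.sqrt_lt' hBpos]
    nlinarith
  have hgt : B - 2 * d < Real.sqrt D := by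
    nlinarith [sq_nonneg (Real.sqrt D - (B - 2 * d))]
  have hlam0 : 0 < lam := by
    rw [hlam]
    exact div_pos (by linarith) (by linarith)
  have hlam1 : lam < 1 := by
    rw [hlam, div_lt_one (by linarith)]
    linarith
  have hden : 0 < 1 - α10 * lam := by
    have := mul_le_of_le_one_right ha0 hlam1.le
    linarith
  have hnum : 0 < α01 + α11 * lam := by
    rcases eq_or_lt_of_le hb0 with h | h
    · have hc : 0 < α11 := lt_of_le_of_ne hc0 (fun e => hzero.2.2 ⟨h.symm, e.symm⟩)
      have := mul_pos hc hlam0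
      linarith
    · have := mul_nonneg hc0 hlam0.le
      linarith
  have hkey : α10 * lam + α11 * lam ≤ α10 + α11 := by
    have e : 0 ≤ (1 - lam) * (α10 + α11) :=
      mul_nonneg (by linarith) (by linarith)
    nlinarith [e]
  refine ⟨hDpos, ⟨hlam0, hlam1⟩, ?_, ?_⟩
  · rw [hη]; exact div_pos hnum hden
  · rw [hη, div_lt_one hden]
    linarith
end

section
/- The INMA(q₁,q₂) random field has marginal variance σ_X² = μ_X + (σ_ε² − μ_ε)·Σ_{i=0}^{q₁} Σ_{j=0}^{q₂} β_{ij}², where μ_X = μ_ε β_•. -/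
/-!
Conditionally on `Y = n`, a binomial thinning `T` of `Y` is `Bin(n, β)`, whose probability of `k`
is the Bernstein polynomial `bernsteinPolynomial ℝ n k` evaluated at `β`. The Bernstein identities
give the conditional moments `E[T | Y = n] = nβ` and `E[T² | Y = n] = n²β² + nβ(1 - β)`; averaging
over `Y` yields `Var T = β E Y + β² (Var Y - E Y)`. The field `X_{s,t}` is a sum of independent
thinnings, so these variances add.
-/

open MeasureTheory ProbabilityTheory

/-- `T` arises from `Y` by binomial thinning with parameter `β`: conditionally on
`Y = n`, `T ~ Bin(n, β)`. -/
def IsBinomialThinning {Ω : Type*} [MeasurableSpace Ω] (μ : Measure Ω) (β : ℝ)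
    (Y T : Ω → ℕ) : Prop :=
  ∀ n k : ℕ, μ {ω | Y ω = n ∧ T ω = k}
    = μ {ω | Y ω = n} * ENNReal.ofReal ((n.choose k : ℝ) * β ^ k * (1 - β) ^ (n - k))

open Finset Polynomial
open scoped ENNReal

section Bernstein

variable {R : Type*} [CommRing R]

lemma bernsteinPolynomial.eval_eq (n k : ℕ) (x : R) :
    (bernsteinPolynomial R n k).eval x = n.choose k * x ^ k * (1 - x) ^ (n - k) := by
  simp [bernsteinPolynomial]

lemma bernsteinPolynomial.eval_nonneg (n k : ℕ) {x : ℝ} (hx : x ∈ Set.Icc 0 1) :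
    0 ≤ (bernsteinPolynomial ℝ n k).eval x := by
  rw [bernsteinPolynomial.eval_eq]
  exact mul_nonneg (mul_nonneg (Nat.cast_nonneg _) (pow_nonneg hx.1 _))
    (pow_nonneg (sub_nonneg.2 hx.2) _)

lemma bernsteinPolynomial.sum_mul_eval (n : ℕ) (x : R) :
    ∑ k ∈ range (n + 1), (k : R) * (bernsteinPolynomial R n k).eval x = n * x := by
  simpa [eval_finsetSum] using congrArg (eval x) (bernsteinPolynomial.sum_smul R n)

lemma bernsteinPolynomial.sum_sq_mul_eval (n : ℕ) (x : R) :
    ∑ k ∈ range (n + 1), (k : R) ^ 2 * (bernsteinPolynomial R n k).eval x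
      = n ^ 2 * x ^ 2 + n * (x * (1 - x)) := by
  have h2 := congrArg (eval x) (bernsteinPolynomial.sum_mul_smul R n)
  simp only [nsmul_eq_mul, Nat.cast_mul, eval_finsetSum, eval_mul, eval_natCast, eval_pow,
    eval_X] at h2
  have hcast : ∀ m : ℕ, (m : R) * ((m - 1 : ℕ) : R) = (m : R) ^ 2 - m := by
    rintro (_ | m) <;> simp; ring
  simp only [hcast, sub_mul, sum_sub_distrib, sum_mul_eval] at h2
  linear_combination h2

end Bernstein

section Thinning

variable {Ω : Type*} [MeasurableSpace Ω] {μ : Measure Ω}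

lemma lintegral_comp_eq_tsum {α : Type*} [MeasurableSpace α] [Countable α]
    [MeasurableSingletonClass α] {Z : Ω → α} (hZ : Measurable Z) (f : α → ℝ≥0∞) :
    ∫⁻ ω, f (Z ω) ∂μ = ∑' a, f a * μ (Z ⁻¹' {a}) := by
  rw [← lintegral_map (measurable_of_countable f) hZ, lintegral_countable']
  simp_rw [Measure.map_apply hZ (measurableSet_singleton _)]

variable {β : ℝ} {Y T : Ω → ℕ}

namespace IsBinomialThinning

lemma ae_le (h : IsBinomialThinning μ β Y T) : ∀ᵐ ω ∂μ, T ω ≤ Y ω := by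
  have hnull : ∀ n k : ℕ, n < k → μ {ω | Y ω = n ∧ T ω = k} = 0 := fun n k hnk => by
    simp [h n k, Nat.choose_eq_zero_of_lt hnk]
  have hcover : {ω | ¬T ω ≤ Y ω} ⊆ ⋃ n, ⋃ k, ⋃ (_ : n < k), {ω | Y ω = n ∧ T ω = k} :=
    fun ω hω => by simp only [Set.mem_iUnion]; exact ⟨_, _, not_le.1 hω, rfl, rfl⟩
  exact measure_mono_null hcover (measure_iUnion_null fun n => measure_iUnion_null fun k =>
    measure_iUnion_null fun hnk => hnull n k hnk)

lemma lintegral_comp (h : IsBinomialThinning μ β Y T) (hY : Measurable Y) (hT : Measurable T)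
    (f : ℕ → ℝ≥0∞) :
    ∫⁻ ω, f (T ω) ∂μ = ∫⁻ ω, ∑ k ∈ range (Y ω + 1),
      f k * ENNReal.ofReal ((bernsteinPolynomial ℝ (Y ω) k).eval β) ∂μ := by
  calc ∫⁻ ω, f (T ω) ∂μ
      = ∑' p : ℕ × ℕ, f p.2 * μ ((fun ω => (Y ω, T ω)) ⁻¹' {p}) :=
        lintegral_comp_eq_tsum (f := fun p : ℕ × ℕ => f p.2) (hY.prodMk hT)
    _ = ∑' n : ℕ, ∑' k : ℕ, f k * μ {ω | Y ω = n ∧ T ω = k} := by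
        simp only [Set.preimage, Set.mem_singleton_iff, Prod.ext_iff]
        exact ENNReal.tsum_prod (f := fun n k => f k * μ {ω | Y ω = n ∧ T ω = k})
    _ = ∑' n : ℕ, (∑ k ∈ range (n + 1), f k *
          ENNReal.ofReal ((bernsteinPolynomial ℝ n k).eval β)) * μ (Y ⁻¹' {n}) := by
        refine tsum_congr fun n => ?_
        rw [tsum_eq_sum (s := range (n + 1)), sum_mul]
        · refine sum_congr rfl fun k _ => ?_
          rw [h n k, bernsteinPolynomial.eval_eq, ← mul_assoc, mul_right_comm]
          rfl
        · intro k hk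
          simp [h n k, Nat.choose_eq_zero_of_lt (by simpa using hk)]
    _ = _ := (lintegral_comp_eq_tsum hY _).symm

lemma integral_comp (h : IsBinomialThinning μ β Y T) (hβ : β ∈ Set.Icc 0 1) (hY : Measurable Y)
    (hT : Measurable T) (f : ℕ → ℝ) (hf : ∀ k, 0 ≤ f k) :
    ∫ ω, f (T ω) ∂μ = ∫ ω, ∑ k ∈ range (Y ω + 1),
      f k * (bernsteinPolynomial ℝ (Y ω) k).eval β ∂μ := by
  have hweight : ∀ n k, 0 ≤ f k * (bernsteinPolynomial ℝ n k).eval β := fun n k =>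
    mul_nonneg (hf k) (bernsteinPolynomial.eval_nonneg n k hβ)
  rw [integral_eq_lintegral_of_nonneg_ae (ae_of_all _ fun ω => hf _)
      ((measurable_of_countable f).comp hT).aestronglyMeasurable,
    integral_eq_lintegral_of_nonneg_ae (ae_of_all _ fun ω => sum_nonneg fun k _ => hweight _ k)
      ((measurable_of_countable fun n => ∑ k ∈ range (n + 1),
        f k * (bernsteinPolynomial ℝ n k).eval β).comp hY).aestronglyMeasurable,
    h.lintegral_comp hY hT fun k => ENNReal.ofReal (f k)]
  congr 1
  refine lintegral_congr fun ω => ?_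
  rw [ENNReal.ofReal_sum_of_nonneg fun k _ => hweight _ k]
  simp_rw [ENNReal.ofReal_mul (hf _)]

lemma integral_natCast (h : IsBinomialThinning μ β Y T) (hβ : β ∈ Set.Icc 0 1)
    (hY : Measurable Y) (hT : Measurable T) :
    ∫ ω, (T ω : ℝ) ∂μ = β * ∫ ω, (Y ω : ℝ) ∂μ := by
  rw [h.integral_comp hβ hY hT (fun k => (k : ℝ)) fun k => k.cast_nonneg]
  simp_rw [bernsteinPolynomial.sum_mul_eval]
  rw [integral_mul_const, mul_comm]

lemma integral_natCast_sq [IsFiniteMeasure μ] (h : IsBinomialThinning μ β Y T)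
    (hβ : β ∈ Set.Icc 0 1) (hY : Measurable Y) (hT : Measurable T)
    (hY2 : MemLp (fun ω => (Y ω : ℝ)) 2 μ) :
    ∫ ω, (T ω : ℝ) ^ 2 ∂μ = β ^ 2 * ∫ ω, (Y ω : ℝ) ^ 2 ∂μ + β * (1 - β) * ∫ ω, (Y ω : ℝ) ∂μ := by
  rw [h.integral_comp hβ hY hT (fun k => (k : ℝ) ^ 2) fun k => sq_nonneg _]
  simp_rw [bernsteinPolynomial.sum_sq_mul_eval]
  rw [integral_add, integral_mul_const, integral_mul_const]
  · ring
  · exact hY2.integrable_sq.mul_const _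
  · exact (hY2.integrable one_le_two).mul_const _

lemma memLp_two (h : IsBinomialThinning μ β Y T) (hT : Measurable T)
    (hY2 : MemLp (fun ω => (Y ω : ℝ)) 2 μ) : MemLp (fun ω => (T ω : ℝ)) 2 μ :=
  hY2.mono ((measurable_of_countable _).comp hT).aestronglyMeasurable
    (h.ae_le.mono fun ω hω => by simpa using hω)

lemma variance_natCast [IsProbabilityMeasure μ] (h : IsBinomialThinning μ β Y T)
    (hβ : β ∈ Set.Icc 0 1) (hY : Measurable Y) (hT : Measurable T)
    (hY2 : MemLp (fun ω => (Y ω : ℝ)) 2 μ) :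
    variance (fun ω => (T ω : ℝ)) μ
      = β * ∫ ω, (Y ω : ℝ) ∂μ + β ^ 2 * (variance (fun ω => (Y ω : ℝ)) μ - ∫ ω, (Y ω : ℝ) ∂μ) := by
  rw [variance_eq_sub (h.memLp_two hT hY2), variance_eq_sub hY2]
  simp only [Pi.pow_def]
  rw [h.integral_natCast_sq hβ hY hT hY2, h.integral_natCast hβ hY hT]
  ring

end IsBinomialThinning

lemma variance_sum_of_isBinomialThinning [IsProbabilityMeasure μ] {ι : Type*} (S : Finset ι)
    (β : ι → ℝ) (Y T : ι → Ω → ℕ) (hβ : ∀ i ∈ S, β i ∈ Set.Icc 0 1)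
    (hY : ∀ i, Measurable (Y i)) (hT : ∀ i, Measurable (T i))
    (hthin : ∀ i ∈ S, IsBinomialThinning μ (β i) (Y i) (T i)) (hindep : iIndepFun T μ)
    (hY2 : ∀ i ∈ S, MemLp (fun ω => (Y i ω : ℝ)) 2 μ) :
    variance (fun ω => ∑ i ∈ S, (T i ω : ℝ)) μ
      = ∑ i ∈ S, (β i * ∫ ω, (Y i ω : ℝ) ∂μ
          + β i ^ 2 * (variance (fun ω => (Y i ω : ℝ)) μ - ∫ ω, (Y i ω : ℝ) ∂μ)) := by
  have hpair : Set.Pairwise S fun i j =>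
      IndepFun (fun ω => (T i ω : ℝ)) (fun ω => (T j ω : ℝ)) μ := fun i _ j _ hij =>
    (hindep.indepFun hij).comp (measurable_of_countable _) (measurable_of_countable _)
  have hsum : (fun ω => ∑ i ∈ S, (T i ω : ℝ)) = ∑ i ∈ S, fun ω => (T i ω : ℝ) := by
    funext ω; simp
  rw [hsum, IndepFun.variance_sum (fun i hi => (hthin i hi).memLp_two (hT i) (hY2 i hi)) hpair]
  exact sum_congr rfl fun i hi =>
    (hthin i hi).variance_natCast (hβ i hi) (hY i) (hT i) (hY2 i hi)

end Thinning

/-- **Marginal variance of the INMA(q₁,q₂) random field.**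
For `X_{s,t} = ∑_{i=0}^{q₁} ∑_{j=0}^{q₂} β_{ij}∘ε_{s−i,t−j}` with `β_{ij} ∈ [0,1]`,
i.i.d. innovations with mean `μ_ε`, variance `σ_ε²` and finite second moment,
binomial thinnings, and the summands (thinnings of distinct innovations) mutually
independent, the marginal variance is
`σ_X² = μ_X + (σ_ε² − μ_ε)·∑_{i,j} β_{ij}²`, where `μ_X = μ_ε β_•`. -/
theorem INMA_variance
    {Ω : Type*} [MeasurableSpace Ω] (μ : Measure Ω) [IsProbabilityMeasure μ]
    (q₁ q₂ : ℕ) (X : ℤ → ℤ → Ω → ℕ) (ε : ℤ → ℤ → Ω → ℕ)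
    (W : ℕ → ℕ → ℤ → ℤ → Ω → ℕ)
    (β : ℕ → ℕ → ℝ)
    (hβ : ∀ i ∈ Finset.range (q₁ + 1), ∀ j ∈ Finset.range (q₂ + 1),
      β i j ∈ Set.Icc (0 : ℝ) 1)
    (hεmeas : ∀ s t, Measurable (ε s t))
    (hWmeas : ∀ i j s t, Measurable (W i j s t))
    (hthin : ∀ i ∈ Finset.range (q₁ + 1), ∀ j ∈ Finset.range (q₂ + 1), ∀ s t : ℤ,
      IsBinomialThinning μ (β i j) (ε (s - (i : ℤ)) (t - (j : ℤ))) (W i j s t))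
    (hWindep : ∀ s t : ℤ,
      iIndepFun (fun p : ℕ × ℕ => W p.1 p.2 s t) μ)
    (hrec : ∀ s t ω, X s t ω
      = ∑ i ∈ Finset.range (q₁ + 1), ∑ j ∈ Finset.range (q₂ + 1), W i j s t ω)
    (με σε2 : ℝ)
    (hεmom2 : ∀ s t, Integrable (fun ω => ((ε s t ω : ℝ)) ^ 2) μ)
    (hεmean : ∀ s t, ∫ ω, (ε s t ω : ℝ) ∂μ = με)
    (hεvar : ∀ s t : ℤ, variance (fun ω => (ε s t ω : ℝ)) μ = σε2) :
    ∀ s t : ℤ, variance (fun ω => (X s t ω : ℝ)) μ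
      = (με * ∑ i ∈ Finset.range (q₁ + 1), ∑ j ∈ Finset.range (q₂ + 1), β i j)
        + (σε2 - με)
          * ∑ i ∈ Finset.range (q₁ + 1), ∑ j ∈ Finset.range (q₂ + 1), (β i j) ^ 2 := by
  intro s t
  have hε2 : ∀ s t, MemLp (fun ω => (ε s t ω : ℝ)) 2 μ := fun s t =>
    (memLp_two_iff_integrable_sq
      ((measurable_of_countable _).comp (hεmeas s t)).aestronglyMeasurable).2 (hεmom2 s t)
  have hX : (fun ω => (X s t ω : ℝ))
      = fun ω => ∑ p ∈ range (q₁ + 1) ×ˢ range (q₂ + 1), (W p.1 p.2 s t ω : ℝ) := by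
    funext ω
    simp [hrec, sum_product]
  rw [hX, variance_sum_of_isBinomialThinning _ (fun p => β p.1 p.2)
      (fun p => ε (s - p.1) (t - p.2)) (fun p => W p.1 p.2 s t)
      (fun p hp => hβ _ (mem_product.1 hp).1 _ (mem_product.1 hp).2)
      (fun _ => hεmeas _ _) (fun _ => hWmeas _ _ _ _)
      (fun p hp => hthin _ (mem_product.1 hp).1 _ (mem_product.1 hp).2 s t)
      (hWindep s t) (fun _ _ => hε2 _ _)]
  simp only [hεmean, hεvar, sum_product, mul_sum, ← sum_add_distrib]
  refine sum_congr rfl fun i _ => sum_congr rfl fun j _ => by ring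
end

section
/- If the innovations of the INMA(q₁,q₂) random field are Poisson(λ) distributed, then the observation X_{s,t} is Poisson distributed with parameter λ·β_•, where β_• = Σ_{i,j} β_{ij}. -/
/-!
A binomial thinning with parameter `β` of a Poisson(λ) variable is Poisson(βλ): the joint
weight `e^{-λ} λⁿ/n! · C(n,k) βᵏ (1-β)ⁿ⁻ᵏ` factors as
`e^{-βλ} (βλ)ᵏ/k! · e^{-(1-β)λ} ((1-β)λ)ⁿ⁻ᵏ/(n-k)!`, and summing over `n ≥ k` leaves the
Poisson(βλ) weight of `k`. The observation is then a finite sum of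
independent Poisson variables, hence Poisson with the summed rate.
-/

open MeasureTheory ProbabilityTheory
open scoped NNReal

open Real
open scoped Nat

theorem hasSum_poisson_mul_binomial (a b : ℝ) (k : ℕ) :
    HasSum (fun n : ℕ => exp (-a) * a ^ n / n ! * (n.choose k * b ^ k * (1 - b) ^ (n - k)))
      (exp (-(b * a)) * (b * a) ^ k / k !) := by
  set f : ℕ → ℝ := fun n => exp (-a) * a ^ n / n ! * (n.choose k * b ^ k * (1 - b) ^ (n - k))
  have hlow : ∀ n ∈ Finset.range k, f n = 0 := fun n hn => by
    simp [f, Nat.choose_eq_zero_of_lt (Finset.mem_range.mp hn)]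
  have hshift : (fun m => f (m + k)) =
      fun m => exp (-a) * (b * a) ^ k / k ! * (((1 - b) * a) ^ m / m !) := by
    funext m
    have hfact : ((m + k).choose k : ℝ) * k ! * m ! = (m + k)! := by
      exact_mod_cast Nat.add_sub_cancel m k ▸ Nat.choose_mul_factorial_mul_factorial
        (Nat.le_add_left k m)
    have hchoose : ((m + k).choose k : ℝ) ≠ 0 :=
      Nat.cast_ne_zero.mpr (Nat.choose_pos (Nat.le_add_left k m)).ne'
    simp only [f, Nat.add_sub_cancel, mul_pow, pow_add]
    rw [← hfact]
    field_simp
  have hsum : HasSum (fun m => f (m + k)) (exp (-(b * a)) * (b * a) ^ k / k !) := by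
    have hexp : exp (-(b * a)) = exp (-a) * exp ((1 - b) * a) := by
      rw [← exp_add]; ring_nf
    have hseries := (NormedSpace.expSeries_div_hasSum_exp ((1 - b) * a)).mul_left
      (exp (-a) * (b * a) ^ k / k !)
    rw [← exp_eq_exp_ℝ] at hseries
    rw [hshift, hexp]
    convert! hseries using 1
    ring
  exact (hasSum_nat_add_iff' k).mp (by rwa [Finset.sum_eq_zero hlow, sub_zero])

theorem poissonMeasure_zero : poissonMeasure 0 = Measure.dirac 0 := by
  refine Measure.ext_iff_singleton.mpr fun n => ?_
  rcases n with _ | n <;> simp [poissonMeasure_singleton]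

section

variable {Ω : Type*} [MeasurableSpace Ω] {μ : Measure Ω}

theorem ProbabilityTheory.iIndepFun.hasLaw_sum_poissonMeasure [IsProbabilityMeasure μ]
    {ι : Type*} {Z : ι → Ω → ℕ} {r : ι → ℝ≥0} (hind : iIndepFun Z μ)
    (hZ : ∀ i, AEMeasurable (Z i) μ)
    (s : Finset ι) (hlaw : ∀ i ∈ s, HasLaw (Z i) (poissonMeasure (r i)) μ) :
    HasLaw (∑ i ∈ s, Z i) (poissonMeasure (∑ i ∈ s, r i)) μ := by
  classical
  induction s using Finset.induction_on with
  | empty =>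
    rw [Finset.sum_empty, Finset.sum_empty, poissonMeasure_zero]
    exact hasLaw_dirac_of_ae_eq (Filter.Eventually.of_forall fun _ => rfl)
  | insert i s hi ih =>
    rw [Finset.sum_insert hi, Finset.sum_insert hi, add_comm, add_comm (r i)]
    exact (hind.indepFun_finsetSum_of_notMem₀ hZ hi).hasLaw_add_poissonMeasure
      (ih fun j hj => hlaw j (Finset.mem_insert_of_mem hj)) (hlaw i (Finset.mem_insert_self i s))

theorem IsBinomialThinning.hasLaw_poissonMeasure {β a : ℝ≥0} {Y T : Ω → ℕ}
    (hβ : β ≤ 1) (hY : Measurable Y) (hT : Measurable T) (hYlaw : HasLaw Y (poissonMeasure a) μ)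
    (hthin : IsBinomialThinning μ β Y T) :
    HasLaw T (poissonMeasure (β * a)) μ := by
  refine ⟨hT.aemeasurable, Measure.ext_iff_singleton.mpr fun k => ?_⟩
  set p : ℕ → ℝ := fun n =>
    exp (-a) * a ^ n / n ! * (n.choose k * β ^ k * (1 - β) ^ (n - k))
  have hp : HasSum p (exp (-(β * a : ℝ≥0)) * (β * a : ℝ≥0) ^ k / k !) := by
    simpa only [NNReal.coe_mul] using hasSum_poisson_mul_binomial a β k
  have hp_nonneg : ∀ n, 0 ≤ p n := fun n => by
    have : 0 ≤ 1 - (β : ℝ) := sub_nonneg.mpr (by exact_mod_cast hβ)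
    positivity
  have hfiber : T ⁻¹' {k} = ⋃ n, {ω | Y ω = n ∧ T ω = k} := by
    ext ω; simp
  have hdisj : Pairwise (Function.onFun Disjoint fun n => {ω | Y ω = n ∧ T ω = k}) :=
    fun m n hmn => Set.disjoint_left.mpr fun ω hm hn => hmn (hm.1.symm.trans hn.1)
  have hmeas : ∀ n, MeasurableSet {ω | Y ω = n ∧ T ω = k} := fun n =>
    (hY (measurableSet_singleton n)).inter (hT (measurableSet_singleton k))
  have hjoint : ∀ n, μ {ω | Y ω = n ∧ T ω = k} = ENNReal.ofReal (p n) := fun n => by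
    rw [hthin n k, hYlaw.measure_eq (p := (· = n)) (measurableSet_singleton n),
      Set.ofPred_eq_eq_singleton, poissonMeasure_singleton,
      ← ENNReal.ofReal_mul (by positivity)]
  rw [Measure.map_apply hT (measurableSet_singleton k), poissonMeasure_singleton, hfiber,
    measure_iUnion hdisj hmeas, tsum_congr hjoint,
    ← ENNReal.ofReal_tsum_of_nonneg hp_nonneg hp.summable, hp.tsum_eq]

end

/-- **Poisson innovations yield Poisson INMA observations.**
If the i.i.d. innovations of the INMA(q₁,q₂) random field
`X_{s,t} = ∑_{i=0}^{q₁} ∑_{j=0}^{q₂} β_{ij}∘ε_{s−i,t−j}` are Poisson(λ) distributed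
and the summands (thinnings of distinct innovations) are mutually independent, then
`X_{s,t}` is Poisson distributed with parameter `λ·β_•`, `β_• = ∑_{i,j} β_{ij}`. -/
theorem INMA_poisson
    {Ω : Type*} [MeasurableSpace Ω] (μ : Measure Ω) [IsProbabilityMeasure μ]
    (q₁ q₂ : ℕ) (X : ℤ → ℤ → Ω → ℕ) (ε : ℤ → ℤ → Ω → ℕ)
    (W : ℕ → ℕ → ℤ → ℤ → Ω → ℕ)
    (β : ℕ → ℕ → ℝ≥0)
    (hβ : ∀ i ∈ Finset.range (q₁ + 1), ∀ j ∈ Finset.range (q₂ + 1), β i j ≤ 1)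
    (lam : ℝ≥0)
    (hεmeas : ∀ s t, Measurable (ε s t))
    (hWmeas : ∀ i j s t, Measurable (W i j s t))
    (hεPoisson : ∀ s t : ℤ, Measure.map (ε s t) μ = poissonMeasure lam)
    (hthin : ∀ i ∈ Finset.range (q₁ + 1), ∀ j ∈ Finset.range (q₂ + 1), ∀ s t : ℤ,
      IsBinomialThinning μ (β i j : ℝ) (ε (s - (i : ℤ)) (t - (j : ℤ))) (W i j s t))
    (hWindep : ∀ s t : ℤ,
      iIndepFun (fun p : ℕ × ℕ => W p.1 p.2 s t) μ)
    (hrec : ∀ s t ω, X s t ω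
      = ∑ i ∈ Finset.range (q₁ + 1), ∑ j ∈ Finset.range (q₂ + 1), W i j s t ω) :
    ∀ s t : ℤ, Measure.map (X s t) μ
      = poissonMeasure
          (lam * ∑ i ∈ Finset.range (q₁ + 1), ∑ j ∈ Finset.range (q₂ + 1), β i j) := by
  intro s t
  set F := Finset.range (q₁ + 1) ×ˢ Finset.range (q₂ + 1)
  have hX : X s t = ∑ p ∈ F, W p.1 p.2 s t := by
    funext ω
    rw [hrec, Finset.sum_apply, Finset.sum_product]
  have hrate : lam * ∑ i ∈ Finset.range (q₁ + 1), ∑ j ∈ Finset.range (q₂ + 1), β i j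
      = ∑ p ∈ F, β p.1 p.2 * lam := by
    simp only [F, Finset.sum_product, mul_comm lam, Finset.sum_mul]
  have hlaw : ∀ p ∈ F, HasLaw (W p.1 p.2 s t) (poissonMeasure (β p.1 p.2 * lam)) μ := by
    rintro ⟨i, j⟩ hp
    obtain ⟨hi, hj⟩ := Finset.mem_product.mp hp
    exact (hthin i hi j hj s t).hasLaw_poissonMeasure (hβ i hi j hj) (hεmeas _ _)
      (hWmeas i j s t) ⟨(hεmeas _ _).aemeasurable, hεPoisson _ _⟩
  rw [hX, hrate]
  exact ((hWindep s t).hasLaw_sum_poissonMeasure (fun p => (hWmeas p.1 p.2 s t).aemeasurable)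
    F hlaw).map_eq
end

section
/- For the INMA(q₁,q₂) spread model, where the vector of counting-series indicators for each innovation individual is multinomial MULT(1; β₀₀,...,β_{q₁q₂}) with β_• ≤ 1, the autocovariance at lag (k,l) ≠ (0,0) equals γ(k,l) = (σ_ε² − μ_ε)·Σ_{(i,j)∈S₀₀∩S_{kl}} β_{i,j}β_{i−k,j−l}, where S_{kl} = {(i+k, j+l) : 0 ≤ i ≤ q₁, 0 ≤ j ≤ q₂}. -/
/-!
Write `X_{s,t} = ∑_p β_p ∘ ε_{(s,t)-p}`. The counting series are independent of the innovations,
so conditioning on the innovations gives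
`E[(β_p ∘ ε_v) (β_{p'} ∘ ε_{v'})] = β_p β_{p'} E[N]` with
`N = #{(r, r') : r < ε_v, r' < ε_{v'}, (v, r) ≠ (v', r')}`:
distinct individuals are independent, and in the spread model one individual is never sent to two
offsets. The count is `ε_v ε_{v'} - 1{v = v'} ε_v`, with mean `μ_ε² + 1{v = v'} (σ_ε² - μ_ε)`.
Subtracting the product of the means `μ_ε β_p · μ_ε β_{p'}` leaves only the pairs with a common
innovation, `v = v'`, i.e. `p' = p + (k, l)`.
-/

open MeasureTheory ProbabilityTheory

/-- The lag set `S_{kl} = {(i+k, j+l) : 0 ≤ i ≤ q₁, 0 ≤ j ≤ q₂}` as a finite subset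
of `ℤ × ℤ`. -/
def lagWindow (q₁ q₂ : ℕ) (k l : ℤ) : Finset (ℤ × ℤ) :=
  (Finset.range (q₁ + 1) ×ˢ Finset.range (q₂ + 1)).image
    (fun p => ((p.1 : ℤ) + k, (p.2 : ℤ) + l))

open scoped ENNReal

theorem lintegral_sum_finset_of_indepFun {Ω ι β γ : Type*} [MeasurableSpace Ω]
    {μ : Measure Ω} [Countable ι] [MeasurableSpace β] [MeasurableSpace γ] {G : Ω → β} {H : Ω → γ}
    (hGH : IndepFun G H μ) (hG : Measurable G) (hH : Measurable H) {R : β → Finset ι}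
    (hR : ∀ i, MeasurableSet {b | i ∈ R b}) {W : ι → γ → ℝ≥0∞} (hW : ∀ i, Measurable (W i)) :
    ∫⁻ ω, ∑ i ∈ R (G ω), W i (H ω) ∂μ
      = ∫⁻ ω, ∑ i ∈ R (G ω), ∫⁻ ω', W i (H ω') ∂μ ∂μ := by
  classical
  have hsum : ∀ (s : Finset ι) (f : ι → ℝ≥0∞),
      ∑ i ∈ s, f i = ∑' i, (if i ∈ s then 1 else 0) * f i := fun s f => by
    rw [sum_eq_tsum_indicator]
    exact tsum_congr fun i => by by_cases hi : i ∈ s <;> simp [hi]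
  have hφ : ∀ i, Measurable fun b => if i ∈ R b then (1 : ℝ≥0∞) else 0 := fun i =>
    Measurable.ite (hR i) measurable_const measurable_const
  have hI : ∀ i, Measurable fun ω => if i ∈ R (G ω) then (1 : ℝ≥0∞) else 0 := fun i =>
    (hφ i).comp hG
  have hWH : ∀ i, Measurable fun ω => W i (H ω) := fun i => (hW i).comp hH
  have hIW : ∀ i, IndepFun (fun ω => if i ∈ R (G ω) then (1 : ℝ≥0∞) else 0)
      (fun ω => W i (H ω)) μ := fun i =>
    hGH.comp (hφ i) (hW i)
  simp_rw [hsum]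
  rw [lintegral_tsum (f := fun i ω => (if i ∈ R (G ω) then 1 else 0) * W i (H ω))
      fun i => ((hI i).mul (hWH i)).aemeasurable,
    lintegral_tsum (f := fun i ω => (if i ∈ R (G ω) then 1 else 0) * ∫⁻ ω', W i (H ω') ∂μ)
      fun i => ((hI i).mul_const _).aemeasurable]
  refine tsum_congr fun i => ?_
  rw [lintegral_mul_const _ (hI i)]
  exact lintegral_mul_eq_lintegral_mul_lintegral_of_indepFun (hI i) (hWH i) (hIW i)

theorem lintegral_natCast_eq_ofReal_integral {Ω : Type*} [MeasurableSpace Ω]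
    {μ : Measure Ω} {f : Ω → ℕ} (hf : Integrable (fun ω => (f ω : ℝ)) μ) :
    ∫⁻ ω, (f ω : ℝ≥0∞) ∂μ = ENNReal.ofReal (∫ ω, (f ω : ℝ) ∂μ) := by
  rw [ofReal_integral_eq_lintegral_ofReal hf (ae_of_all _ fun ω => Nat.cast_nonneg _)]
  simp_rw [ENNReal.ofReal_natCast]

theorem integral_natCast_sum_eq_of_lintegral_eq {Ω ι : Type*} [MeasurableSpace Ω]
    {μ : Measure Ω} {s : Finset ι} {f : ι → Ω → ℕ} {a : ι → ℝ}
    (hf : ∀ i ∈ s, Measurable (f i)) (ha : ∀ i ∈ s, 0 ≤ a i)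
    (h : ∀ i ∈ s, ∫⁻ ω, (f i ω : ℝ≥0∞) ∂μ = ENNReal.ofReal (a i)) :
    ∫ ω, ((∑ i ∈ s, f i ω : ℕ) : ℝ) ∂μ = ∑ i ∈ s, a i := by
  have hsum : Measurable fun ω => ∑ i ∈ s, f i ω := Finset.measurable_sum s hf
  rw [integral_eq_lintegral_of_nonneg_ae (ae_of_all _ fun ω => Nat.cast_nonneg _)
    (by fun_prop)]
  simp_rw [ENNReal.ofReal_natCast, Nat.cast_sum]
  rw [lintegral_finsetSum s fun i hi => by have := hf i hi; fun_prop, Finset.sum_congr rfl h,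
    ← ENNReal.ofReal_sum_of_nonneg ha, ENNReal.toReal_ofReal (Finset.sum_nonneg ha)]

section Thinning

/-- `thinning ε Z v p` is the paper's `β_p ∘ ε_v`: the number of the `ε v` individuals of
innovation `v` whose counting-series indicator `Z v r p` for offset `p` equals one. -/
def thinning {Ω S P : Type*} (ε : S → Ω → ℕ) (Z : S → ℕ → P → Ω → ℕ) (v : S) (p : P)
    (ω : Ω) : ℕ :=
  ∑ r ∈ Finset.range (ε v ω), Z v r p ω

variable {Ω S P : Type*} [MeasurableSpace Ω] {μ : Measure Ω} {ε : S → Ω → ℕ}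
  {Z : S → ℕ → P → Ω → ℕ}

theorem measurable_thinning (hε : ∀ v, Measurable (ε v)) (hZ : ∀ v r p, Measurable (Z v r p))
    (v : S) (p : P) : Measurable (thinning ε Z v p) :=
  (measurable_from_prod_countable_left
      (f := fun x : Ω × ℕ => ∑ r ∈ Finset.range x.2, Z v r p x.1)
      fun n => Finset.measurable_sum (Finset.range n) fun r _ => hZ v r p).comp
    (measurable_id.prodMk (hε v))

theorem measurableSet_mem_range_apply (v : S) (r : ℕ) :
    MeasurableSet {e : S → ℕ | r ∈ Finset.range (e v)} := by
  simp only [Finset.mem_range]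
  exact measurable_pi_apply v measurableSet_Ioi

theorem card_filter_ne_range_product [DecidableEq S] (e : S → ℕ) (v v' : S) :
    ((Finset.range (e v) ×ˢ Finset.range (e v')).filter fun x => (v, x.1) ≠ (v', x.2)).card
      = e v * e v' - if v = v' then e v else 0 := by
  by_cases h : v = v'
  · subst h
    have hdiag : ((Finset.range (e v) ×ˢ Finset.range (e v)).filter fun x => (v, x.1) ≠ (v, x.2))
        = (Finset.range (e v)).offDiag := by
      ext x
      simp [Finset.mem_offDiag, and_assoc]
    rw [hdiag, Finset.offDiag_card, Finset.card_range, if_pos rfl]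
  · rw [Finset.filter_true_of_mem fun x _ => by simp [h], Finset.card_product]
    simp [h]

theorem lintegral_thinning
    (hZε : IndepFun (fun ω => fun a : (S × ℕ) × P => Z a.1.1 a.1.2 a.2 ω)
      (fun ω => fun v : S => ε v ω) μ)
    (hε : ∀ v, Measurable (ε v)) (hZ : ∀ v r p, Measurable (Z v r p)) {v : S} {p : P}
    {c : ℝ≥0∞} (hc : ∀ r, ∫⁻ ω, (Z v r p ω : ℝ≥0∞) ∂μ = c) :
    ∫⁻ ω, (thinning ε Z v p ω : ℝ≥0∞) ∂μ = (∫⁻ ω, (ε v ω : ℝ≥0∞) ∂μ) * c := by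
  have h := lintegral_sum_finset_of_indepFun hZε.symm (measurable_pi_lambda _ hε)
    (measurable_pi_lambda _ fun a => hZ a.1.1 a.1.2 a.2) (measurableSet_mem_range_apply v)
    (W := fun r z => (z ((v, r), p) : ℝ≥0∞)) fun r => by fun_prop
  simp only [hc, Finset.sum_const, Finset.card_range, nsmul_eq_mul] at h
  have hεv := hε v
  simp only [thinning, Nat.cast_sum, h]
  exact lintegral_mul_const _ (by fun_prop)

theorem lintegral_thinning_mul_thinning [DecidableEq S]
    (hZε : IndepFun (fun ω => fun a : (S × ℕ) × P => Z a.1.1 a.1.2 a.2 ω)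
      (fun ω => fun v : S => ε v ω) μ)
    (hε : ∀ v, Measurable (ε v)) (hZ : ∀ v r p, Measurable (Z v r p)) {v v' : S} {p p' : P}
    {c : ℝ≥0∞}
    (hc : ∀ r r', ∫⁻ ω, (Z v r p ω : ℝ≥0∞) * Z v' r' p' ω ∂μ
      = if (v, r) = (v', r') then 0 else c) :
    ∫⁻ ω, ((thinning ε Z v p ω * thinning ε Z v' p' ω : ℕ) : ℝ≥0∞) ∂μ
      = (∫⁻ ω, ((ε v ω * ε v' ω - if v = v' then ε v ω else 0 : ℕ) : ℝ≥0∞) ∂μ) * c := by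
  have h := lintegral_sum_finset_of_indepFun hZε.symm (measurable_pi_lambda _ hε)
    (measurable_pi_lambda _ fun a => hZ a.1.1 a.1.2 a.2)
    (R := fun e => Finset.range (e v) ×ˢ Finset.range (e v'))
    (fun x => by
      simp only [Finset.mem_product, Set.ofPred_and]
      exact (measurableSet_mem_range_apply v x.1).inter (measurableSet_mem_range_apply v' x.2))
    (W := fun x z => (z ((v, x.1), p) : ℝ≥0∞) * z ((v', x.2), p')) fun r => by fun_prop
  simp only [hc, Finset.sum_ite, Finset.sum_const_zero, zero_add, Finset.sum_const,
    nsmul_eq_mul] at h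
  simp only [thinning, Nat.cast_mul, Nat.cast_sum, Finset.sum_mul_sum, ← Finset.sum_product']
  simp only [← ne_eq, fun ω => card_filter_ne_range_product (fun u => ε u ω) v v'] at h
  have hεv := hε v
  have hεv' := hε v'
  rw [h, lintegral_mul_const _ (by fun_prop)]

end Thinning

theorem mul_eq_zero_of_sum_le_one {P : Type*} {F : Finset P} {f : P → ℕ} (h : ∑ q ∈ F, f q ≤ 1)
    {p p' : P} (hp : p ∈ F) (hp' : p' ∈ F) (hne : p ≠ p') : f p * f p' = 0 := by
  classical
  have hpair : f p + f p' ≤ 1 :=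
    (Finset.sum_pair hne).symm.le.trans
      ((Finset.sum_le_sum_of_subset (Finset.insert_subset hp (by simpa using hp'))).trans h)
  rcases Nat.eq_zero_or_pos (f p) with h0 | h0
  · simp [h0]
  · simp [show f p' = 0 by omega]

theorem lintegral_natCast_of_le_one {Ω : Type*} [MeasurableSpace Ω] {μ : Measure Ω}
    {f : Ω → ℕ} (hf : Measurable f) (h : ∀ ω, f ω ≤ 1) :
    ∫⁻ ω, (f ω : ℝ≥0∞) ∂μ = μ {ω | f ω = 1} := by
  rw [← lintegral_indicator_one (s := {ω | f ω = 1}) (hf (measurableSet_singleton 1))]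
  refine lintegral_congr fun ω => ?_
  rcases Nat.le_one_iff_eq_zero_or_eq_one.1 (h ω) with h0 | h1 <;> simp [*]

section Innovations

variable {Ω S : Type*} [MeasurableSpace Ω] {μ : Measure Ω} [DecidableEq S] {ε : S → Ω → ℕ}
  {m σ2 : ℝ}

theorem integral_natCast_mul_natCast_of_iIndepFun [IsProbabilityMeasure μ]
    (hε : ∀ v, Measurable (ε v)) (hindep : iIndepFun ε μ)
    (hsq : ∀ v, Integrable (fun ω => (ε v ω : ℝ) ^ 2) μ)
    (hmean : ∀ v, ∫ ω, (ε v ω : ℝ) ∂μ = m)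
    (hvar : ∀ v, variance (fun ω => (ε v ω : ℝ)) μ = σ2) (v v' : S) :
    ∫ ω, (ε v ω : ℝ) * ε v' ω ∂μ = m ^ 2 + if v = v' then σ2 else 0 := by
  split_ifs with h
  · subst h
    have hL2 : MemLp (fun ω => (ε v ω : ℝ)) 2 μ :=
      (memLp_two_iff_integrable_sq (by fun_prop)).2 (hsq v)
    have := variance_eq_sub hL2
    simp only [hvar, hmean, Pi.pow_apply] at this
    simp only [← sq]
    linarith
  · have hcast : IndepFun (fun ω => (ε v ω : ℝ)) (fun ω => (ε v' ω : ℝ)) μ :=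
      (hindep.indepFun h).comp measurable_from_nat measurable_from_nat
    have := hcast.integral_mul_eq_mul_integral (by fun_prop) (by fun_prop)
    simp only [Pi.mul_apply, hmean] at this
    rw [this]
    ring

theorem integrable_natCast_mul_sub (hε : ∀ v, Measurable (ε v))
    (hsq : ∀ v, Integrable (fun ω => (ε v ω : ℝ) ^ 2) μ) (v v' : S) :
    Integrable (fun ω => ((ε v ω * ε v' ω - if v = v' then ε v ω else 0 : ℕ) : ℝ)) μ := by
  have hL2 : ∀ v, MemLp (fun ω => (ε v ω : ℝ)) 2 μ := fun v =>
    (memLp_two_iff_integrable_sq (by fun_prop)).2 (hsq v)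
  refine ((hL2 v).integrable_mul (hL2 v')).mono (by fun_prop) (ae_of_all _ fun ω => ?_)
  simp only [Real.norm_natCast, Pi.mul_apply, norm_mul]
  exact_mod_cast Nat.sub_le _ _

theorem integral_natCast_mul_sub_of_iIndepFun [IsProbabilityMeasure μ]
    (hε : ∀ v, Measurable (ε v)) (hindep : iIndepFun ε μ)
    (hsq : ∀ v, Integrable (fun ω => (ε v ω : ℝ) ^ 2) μ)
    (hmean : ∀ v, ∫ ω, (ε v ω : ℝ) ∂μ = m)
    (hvar : ∀ v, variance (fun ω => (ε v ω : ℝ)) μ = σ2) (v v' : S) :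
    ∫ ω, ((ε v ω * ε v' ω - if v = v' then ε v ω else 0 : ℕ) : ℝ) ∂μ
      = m ^ 2 + if v = v' then σ2 - m else 0 := by
  have hprod := integral_natCast_mul_natCast_of_iIndepFun hε hindep hsq hmean hvar v v'
  by_cases h : v = v'
  · subst h
    have hL2 : MemLp (fun ω => (ε v ω : ℝ)) 2 μ :=
      (memLp_two_iff_integrable_sq (by fun_prop)).2 (hsq v)
    have hcast : ∀ ω, ((ε v ω * ε v ω - ε v ω : ℕ) : ℝ) = ε v ω * ε v ω - ε v ω :=
      fun ω => by
        push_cast [Nat.le_mul_self]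
        rfl
    simp only [if_true, hcast]
    rw [integral_sub (f := fun ω => (ε v ω : ℝ) * ε v ω) (hL2.integrable_mul hL2)
      (hL2.integrable one_le_two), hprod, hmean, if_pos rfl]
    ring
  · simpa [h] using hprod

end Innovations

/-- The hypotheses of the INMA spread model; the offsets `F` play the role of the paper's `S₀₀`. -/
structure SpreadThinningModel {Ω S P : Type*} [MeasurableSpace Ω] (μ : Measure Ω)
    (ε : S → Ω → ℕ) (Z : S → ℕ → P → Ω → ℕ)
    (F : Finset P) (β : P → ℝ) (m σ2 : ℝ) : Prop where
  measurable_innovation : ∀ v, Measurable (ε v)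
  measurable_indicator : ∀ v r p, Measurable (Z v r p)
  sum_indicator_le_one : ∀ v r ω, ∑ p ∈ F, Z v r p ω ≤ 1
  measure_indicator_eq_one : ∀ v r, ∀ p ∈ F, μ {ω | Z v r p ω = 1} = ENNReal.ofReal (β p)
  nonneg : ∀ p ∈ F, 0 ≤ β p
  iIndepFun_indicator : iIndepFun (fun a : S × ℕ => fun ω => fun p : P => Z a.1 a.2 p ω) μ
  indepFun_indicator_innovation : IndepFun (fun ω => fun a : (S × ℕ) × P => Z a.1.1 a.1.2 a.2 ω)
    (fun ω => fun v : S => ε v ω) μ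
  iIndepFun_innovation : iIndepFun ε μ
  integrable_sq_innovation : ∀ v, Integrable (fun ω => (ε v ω : ℝ) ^ 2) μ
  integral_innovation : ∀ v, ∫ ω, (ε v ω : ℝ) ∂μ = m
  variance_innovation : ∀ v, variance (fun ω => (ε v ω : ℝ)) μ = σ2

namespace SpreadThinningModel

variable {Ω S P : Type*} [MeasurableSpace Ω] {μ : Measure Ω} {ε : S → Ω → ℕ}
  {Z : S → ℕ → P → Ω → ℕ} {F : Finset P} {β : P → ℝ} {m σ2 : ℝ}

theorem lintegral_indicator (M : SpreadThinningModel μ ε Z F β m σ2) (v : S) (r : ℕ) {p : P}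
    (hp : p ∈ F) : ∫⁻ ω, (Z v r p ω : ℝ≥0∞) ∂μ = ENNReal.ofReal (β p) :=
  (lintegral_natCast_of_le_one (M.measurable_indicator v r p) fun ω =>
    (Finset.single_le_sum (fun _ _ => Nat.zero_le _) hp).trans
      (M.sum_indicator_le_one v r ω)).trans (M.measure_indicator_eq_one v r p hp)

theorem lintegral_indicator_mul_indicator [DecidableEq S]
    (M : SpreadThinningModel μ ε Z F β m σ2) {v v' : S} {r r' : ℕ} {p p' : P} (hp : p ∈ F)
    (hp' : p' ∈ F) (hne : v = v' → p ≠ p') :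
    ∫⁻ ω, (Z v r p ω : ℝ≥0∞) * Z v' r' p' ω ∂μ
      = if (v, r) = (v', r') then 0 else ENNReal.ofReal (β p) * ENNReal.ofReal (β p') := by
  have hZ := M.measurable_indicator
  split_ifs with h
  · obtain ⟨rfl, rfl⟩ := Prod.ext_iff.1 h
    simp_rw [← Nat.cast_mul,
      mul_eq_zero_of_sum_le_one (M.sum_indicator_le_one v r _) hp hp' (hne rfl)]
    simp
  · have hZZ := (M.iIndepFun_indicator.indepFun h).comp (φ := fun z => (z p : ℝ≥0∞))
      (ψ := fun z => (z p' : ℝ≥0∞)) (by fun_prop) (by fun_prop)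
    rw [← M.lintegral_indicator v r hp, ← M.lintegral_indicator v' r' hp']
    exact lintegral_mul_eq_lintegral_mul_lintegral_of_indepFun (by fun_prop) (by fun_prop) hZZ

theorem integral_sum_thinning [IsFiniteMeasure μ] (M : SpreadThinningModel μ ε Z F β m σ2)
    (u : P → S) :
    ∫ ω, ((∑ p ∈ F, thinning ε Z (u p) p ω : ℕ) : ℝ) ∂μ = ∑ p ∈ F, m * β p := by
  have hε := M.measurable_innovation
  have hm : ∀ v, ∫ ω, (ε v ω : ℝ) ∂μ = m := M.integral_innovation
  refine integral_natCast_sum_eq_of_lintegral_eq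
    (fun p _ => measurable_thinning hε M.measurable_indicator (u p) p)
    (fun p hp => mul_nonneg (hm (u p) ▸ integral_nonneg fun ω => Nat.cast_nonneg _)
      (M.nonneg p hp)) fun p hp => ?_
  rw [lintegral_thinning M.indepFun_indicator_innovation hε M.measurable_indicator
      fun r => M.lintegral_indicator (u p) r hp,
    lintegral_natCast_eq_ofReal_integral
      (((memLp_two_iff_integrable_sq (by fun_prop)).2
        (M.integrable_sq_innovation (u p))).integrable one_le_two),
    hm, ENNReal.ofReal_mul' (M.nonneg p hp)]

theorem integral_sum_thinning_mul_sum_thinning [IsProbabilityMeasure μ] [DecidableEq S]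
    (M : SpreadThinningModel μ ε Z F β m σ2) (u u' : P → S)
    (hu : ∀ p ∈ F, ∀ p' ∈ F, u p = u' p' → p ≠ p') :
    ∫ ω, ((∑ p ∈ F, thinning ε Z (u p) p ω : ℕ) : ℝ)
        * ((∑ p' ∈ F, thinning ε Z (u' p') p' ω : ℕ) : ℝ) ∂μ
      = ∑ p ∈ F, ∑ p' ∈ F, (m ^ 2 + if u p = u' p' then σ2 - m else 0) * (β p * β p') := by
  have hε := M.measurable_innovation
  have hC := measurable_thinning hε M.measurable_indicator
  simp_rw [← Nat.cast_mul, Finset.sum_mul_sum, ← Finset.sum_product']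
  refine integral_natCast_sum_eq_of_lintegral_eq (fun x _ => (hC _ _).mul (hC _ _))
    (fun x hx => ?_) fun x hx => ?_
  all_goals
    obtain ⟨hp, hp'⟩ := Finset.mem_product.1 hx
    have hββ := mul_nonneg (M.nonneg _ hp) (M.nonneg _ hp')
    have hval := integral_natCast_mul_sub_of_iIndepFun hε M.iIndepFun_innovation
      M.integrable_sq_innovation M.integral_innovation M.variance_innovation (u x.1) (u' x.2)
  · exact mul_nonneg (hval ▸ integral_nonneg fun ω => Nat.cast_nonneg _) hββ
  · rw [lintegral_thinning_mul_thinning M.indepFun_indicator_innovation hε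
        M.measurable_indicator
        fun r r' => M.lintegral_indicator_mul_indicator hp hp' (hu _ hp _ hp'),
      lintegral_natCast_eq_ofReal_integral
        (integrable_natCast_mul_sub hε M.integrable_sq_innovation _ _),
      hval, ENNReal.ofReal_mul' hββ, ENNReal.ofReal_mul (M.nonneg _ hp)]

end SpreadThinningModel

theorem mem_lagWindow {q₁ q₂ : ℕ} {k l : ℤ} {p : ℤ × ℤ} :
    p ∈ lagWindow q₁ q₂ k l ↔ k ≤ p.1 ∧ p.1 ≤ q₁ + k ∧ l ≤ p.2 ∧ p.2 ≤ q₂ + l := by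
  simp only [lagWindow, Finset.mem_image, Finset.mem_product, Finset.mem_range]
  constructor
  · rintro ⟨⟨a, b⟩, ⟨ha, hb⟩, rfl⟩
    dsimp only
    omega
  · rintro ⟨h₁, h₂, h₃, h₄⟩
    exact ⟨((p.1 - k).toNat, (p.2 - l).toNat), ⟨by omega, by omega⟩,
      Prod.ext (by dsimp only; omega) (by dsimp only; omega)⟩

theorem sum_sum_ite_lagWindow (q₁ q₂ : ℕ) (k l : ℤ) (g : ℤ × ℤ → ℤ × ℤ → ℝ) :
    ∑ p ∈ lagWindow q₁ q₂ 0 0, ∑ p' ∈ lagWindow q₁ q₂ 0 0,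
        (if p = (p'.1 - k, p'.2 - l) then g p p' else 0)
      = ∑ p' ∈ lagWindow q₁ q₂ 0 0 ∩ lagWindow q₁ q₂ k l, g (p'.1 - k, p'.2 - l) p' := by
  have hinter : lagWindow q₁ q₂ 0 0 ∩ lagWindow q₁ q₂ k l
      = (lagWindow q₁ q₂ 0 0).filter fun p' => (p'.1 - k, p'.2 - l) ∈ lagWindow q₁ q₂ 0 0 := by
    ext p'
    simp only [Finset.mem_inter, Finset.mem_filter, mem_lagWindow]
    omega
  rw [Finset.sum_comm, hinter, Finset.sum_filter]
  exact Finset.sum_congr rfl fun p' _ => Finset.sum_ite_eq' _ _ _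

theorem INMA_spread_autocovariance_general
    {Ω : Type*} [MeasurableSpace Ω] (μ : Measure Ω) [IsProbabilityMeasure μ]
    (q₁ q₂ : ℕ) (X : ℤ → ℤ → Ω → ℕ) (ε : ℤ × ℤ → Ω → ℕ)
    (Z : ℤ × ℤ → ℕ → ℤ × ℤ → Ω → ℕ)
    (β : ℤ × ℤ → ℝ)
    (hβ : ∀ p ∈ lagWindow q₁ q₂ 0 0, β p ∈ Set.Icc (0 : ℝ) 1)
    (hεmeas : ∀ uv, Measurable (ε uv))
    (hZmeas : ∀ uv r p, Measurable (Z uv r p))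
    -- spread model: for each individual, at most one indicator equals one
    (hspread : ∀ uv r ω, ∑ p ∈ lagWindow q₁ q₂ 0 0, Z uv r p ω ≤ 1)
    -- component `(i,j)` equals one with probability `β_{ij}`
    (hZlaw : ∀ uv r, ∀ p ∈ lagWindow q₁ q₂ 0 0,
      μ {ω | Z uv r p ω = 1} = ENNReal.ofReal (β p))
    -- the indicator vectors are independent across innovations and individuals
    (hZindep : iIndepFun
      (fun a : (ℤ × ℤ) × ℕ => fun ω => fun p : ℤ × ℤ => Z a.1 a.2 p ω) μ)
    -- the whole family of indicators is independent of the whole innovation field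
    (hZε : IndepFun (fun ω => fun a : ((ℤ × ℤ) × ℕ) × (ℤ × ℤ) => Z a.1.1 a.1.2 a.2 ω)
      (fun ω => fun uv : ℤ × ℤ => ε uv ω) μ)
    -- the innovations are i.i.d. with mean `μ_ε`, variance `σ_ε²`, finite 2nd moment
    (hεindep : iIndepFun ε μ)
    (με σε2 : ℝ)
    (hεmom2 : ∀ uv, Integrable (fun ω => ((ε uv ω : ℝ)) ^ 2) μ)
    (hεmean : ∀ uv, ∫ ω, (ε uv ω : ℝ) ∂μ = με)
    (hεvar : ∀ uv, variance (fun ω => (ε uv ω : ℝ)) μ = σε2)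
    -- the INMA(q₁,q₂) spread-model recursion
    (hrec : ∀ s t : ℤ, ∀ ω, X s t ω
      = ∑ p ∈ lagWindow q₁ q₂ 0 0,
          ∑ r ∈ Finset.range (ε (s - p.1, t - p.2) ω), Z (s - p.1, t - p.2) r p ω) :
    ∀ s t k l : ℤ, ¬(k = 0 ∧ l = 0) →
      (∫ ω, (X s t ω : ℝ) * (X (s + k) (t + l) ω : ℝ) ∂μ)
          - (∫ ω, (X s t ω : ℝ) ∂μ) * (∫ ω, (X (s + k) (t + l) ω : ℝ) ∂μ)
        = (σε2 - με)
            * ∑ p ∈ lagWindow q₁ q₂ 0 0 ∩ lagWindow q₁ q₂ k l,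
                β p * β (p.1 - k, p.2 - l) := by
  intro s t k l hkl
  have M : SpreadThinningModel μ ε Z (lagWindow q₁ q₂ 0 0) β με σε2 :=
    ⟨hεmeas, hZmeas, hspread, hZlaw, fun p hp => (hβ p hp).1, hZindep, hZε, hεindep, hεmom2,
      hεmean, hεvar⟩
  have hX : ∀ a b, X a b = fun ω =>
      ∑ p ∈ lagWindow q₁ q₂ 0 0, thinning ε Z (a - p.1, b - p.2) p ω :=
    fun a b => funext (hrec a b)
  have hsite : ∀ p p' : ℤ × ℤ,
      (s - p.1, t - p.2) = (s + k - p'.1, t + l - p'.2) ↔ p = (p'.1 - k, p'.2 - l) := by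
    simp only [Prod.ext_iff]
    omega
  rw [hX, hX, M.integral_sum_thinning_mul_sum_thinning _ _ fun p _ p' _ h hpp => ?_,
    M.integral_sum_thinning, M.integral_sum_thinning]
  · simp only [hsite]
    calc _ = ∑ p ∈ lagWindow q₁ q₂ 0 0, ∑ p' ∈ lagWindow q₁ q₂ 0 0,
          (if p = (p'.1 - k, p'.2 - l) then (σε2 - με) * (β p * β p') else 0) := by
          rw [Finset.sum_mul_sum, ← Finset.sum_sub_distrib]
          refine Finset.sum_congr rfl fun p _ => ?_
          rw [← Finset.sum_sub_distrib]
          refine Finset.sum_congr rfl fun p' _ => ?_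
          split_ifs <;> ring
      _ = _ := by
          rw [sum_sum_ite_lagWindow, Finset.mul_sum]
          exact Finset.sum_congr rfl fun p _ => by ring
  · rw [hsite, hpp] at h
    exact hkl (by simp only [Prod.ext_iff] at h; omega)

/-- **Autocovariance of the INMA(q₁,q₂) spread model.**
In the INMA(q₁,q₂) spread model, the observation is
`X_{s,t} = ∑_{(i,j)∈S₀₀} ∑_{r<ε_{s−i,t−j}} Z_{s−i,t−j;r}^{(i,j)}`, where for each
innovation individual the vector of counting-series indicators
`(Z^{(i,j)})_{(i,j)∈S₀₀}` is multinomial `MULT(1; β₀₀,…,β_{q₁q₂})` with `β_• ≤ 1`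
(at most one component equal to one, component `(i,j)` with probability `β_{ij}`),
these vectors being i.i.d. across individuals and innovations and independent of the
i.i.d. innovations (mean `μ_ε`, variance `σ_ε²`). Then the autocovariance at any lag
`(k,l) ≠ (0,0)` equals
`γ(k,l) = (σ_ε² − μ_ε)·∑_{(i,j)∈S₀₀∩S_{kl}} β_{i,j} β_{i−k,j−l}`. -/
theorem INMA_spread_autocovariance
    {Ω : Type*} [MeasurableSpace Ω] (μ : Measure Ω) [IsProbabilityMeasure μ]
    (q₁ q₂ : ℕ) (X : ℤ → ℤ → Ω → ℕ) (ε : ℤ × ℤ → Ω → ℕ)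
    (Z : ℤ × ℤ → ℕ → ℤ × ℤ → Ω → ℕ)
    (β : ℤ × ℤ → ℝ)
    (hβ : ∀ p ∈ lagWindow q₁ q₂ 0 0, β p ∈ Set.Icc (0 : ℝ) 1)
    (hβsum : ∑ p ∈ lagWindow q₁ q₂ 0 0, β p ≤ 1)
    (hεmeas : ∀ uv, Measurable (ε uv))
    (hZmeas : ∀ uv r p, Measurable (Z uv r p))
    -- the counting-series indicators are `{0,1}`-valued
    (hZ01 : ∀ uv r p ω, Z uv r p ω ≤ 1)
    -- spread model: for each individual, at most one indicator equals one
    (hspread : ∀ uv r ω, ∑ p ∈ lagWindow q₁ q₂ 0 0, Z uv r p ω ≤ 1)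
    -- component `(i,j)` equals one with probability `β_{ij}`
    (hZlaw : ∀ uv r, ∀ p ∈ lagWindow q₁ q₂ 0 0,
      μ {ω | Z uv r p ω = 1} = ENNReal.ofReal (β p))
    -- the indicator vectors are independent across innovations and individuals
    (hZindep : iIndepFun
      (fun a : (ℤ × ℤ) × ℕ => fun ω => fun p : ℤ × ℤ => Z a.1 a.2 p ω) μ)
    -- and identically distributed
    (hZident : ∀ a b : (ℤ × ℤ) × ℕ,
      Measure.map (fun ω => fun p : ℤ × ℤ => Z a.1 a.2 p ω) μ
        = Measure.map (fun ω => fun p : ℤ × ℤ => Z b.1 b.2 p ω) μ)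
    -- the whole family of indicators is independent of the whole innovation field
    (hZε : IndepFun (fun ω => fun a : ((ℤ × ℤ) × ℕ) × (ℤ × ℤ) => Z a.1.1 a.1.2 a.2 ω)
      (fun ω => fun uv : ℤ × ℤ => ε uv ω) μ)
    -- the innovations are i.i.d. with mean `μ_ε`, variance `σ_ε²`, finite 2nd moment
    (hεindep : iIndepFun ε μ)
    (hεident : ∀ uv uv' : ℤ × ℤ, Measure.map (ε uv) μ = Measure.map (ε uv') μ)
    (με σε2 : ℝ)
    (hεmom2 : ∀ uv, Integrable (fun ω => ((ε uv ω : ℝ)) ^ 2) μ)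
    (hεmean : ∀ uv, ∫ ω, (ε uv ω : ℝ) ∂μ = με)
    (hεvar : ∀ uv, variance (fun ω => (ε uv ω : ℝ)) μ = σε2)
    -- the INMA(q₁,q₂) spread-model recursion
    (hrec : ∀ s t : ℤ, ∀ ω, X s t ω
      = ∑ p ∈ lagWindow q₁ q₂ 0 0,
          ∑ r ∈ Finset.range (ε (s - p.1, t - p.2) ω), Z (s - p.1, t - p.2) r p ω)
    (hXmom2 : ∀ s t, Integrable (fun ω => ((X s t ω : ℝ)) ^ 2) μ) :
    ∀ s t k l : ℤ, ¬(k = 0 ∧ l = 0) →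
      (∫ ω, (X s t ω : ℝ) * (X (s + k) (t + l) ω : ℝ) ∂μ)
          - (∫ ω, (X s t ω : ℝ) ∂μ) * (∫ ω, (X (s + k) (t + l) ω : ℝ) ∂μ)
        = (σε2 - με)
            * ∑ p ∈ lagWindow q₁ q₂ 0 0 ∩ lagWindow q₁ q₂ k l,
                β p * β (p.1 - k, p.2 - l) :=
  INMA_spread_autocovariance_general μ q₁ q₂ X ε Z β hβ hεmeas hZmeas hspread hZlaw hZindep hZε
    hεindep με σε2 hεmom2 hεmean hεvar hrec
end
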